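/- arXiv:1602.03118 — 9 statements merged into one kernel-verified Lean document; each statement's English description precedes it below -/
import Mathlib

section
/- The system of equations 2x₀² + x₁² + x₂² = 26 and 3x₁² + x₂² + x₃² = 13 has no solution in integers x₀, x₁, x₂, x₃. -/
theorem no_integral_points :
    ¬ ∃ x₀ x₁ x₂ x₃ : ℤ,
      2 * x₀ ^ 2 + x₁ ^ 2 + x₂ ^ 2 = 26 ∧ 3 * x₁ ^ 2 + x₂ ^ 2 + x₃ ^ 2 = 13 := by
  rintro ⟨a, b, c, d, h1, h2⟩
  have ha : a ^ 2 ≤ 13 := by nlinarith [sq_nonneg b, sq_nonneg c]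
  have hb : b ^ 2 ≤ 4 := by nlinarith [sq_nonneg c, sq_nonneg d]
  have hc : c ^ 2 ≤ 13 := by nlinarith [sq_nonneg b, sq_nonneg d]
  have hd : d ^ 2 ≤ 13 := by nlinarith [sq_nonneg b, sq_nonneg c]
  have ha' : -3 ≤ a ∧ a ≤ 3 := ⟨by nlinarith, by nlinarith⟩
  have hb' : -2 ≤ b ∧ b ≤ 2 := ⟨by nlinarith, by nlinarith⟩
  have hc' : -3 ≤ c ∧ c ≤ 3 := ⟨by nlinarith, by nlinarith⟩
  have hd' : -3 ≤ d ∧ d ≤ 3 := ⟨by nlinarith, by nlinarith⟩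
  obtain ⟨ha1, ha2⟩ := ha'
  obtain ⟨hb1, hb2⟩ := hb'
  obtain ⟨hc1, hc2⟩ := hc'
  obtain ⟨hd1, hd2⟩ := hd'
  interval_cases a <;> interval_cases b <;> interval_cases c <;> interval_cases d <;> omega
end

section
/- Every real solution (x₀, x₁, x₂) with x₀, x₁, x₂ ∈ ℝ of the equation ((11x₀+5)x₁+3)x₂ = 3x₀+1 with |x₁| ≥ 1 and |x₂| ≥ 1 satisfies |x₀| ≤ 9/8. -/
theorem harpaz_obstruction (x₀ x₁ x₂ : ℝ)
    (h : ((11 * x₀ + 5) * x₁ + 3) * x₂ = 3 * x₀ + 1)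
    (h₁ : 1 ≤ |x₁|) (h₂ : 1 ≤ |x₂|) :
    |x₀| ≤ 9 / 8 := by
  rcases abs_cases x₁ with ⟨e1, s1⟩ | ⟨e1, s1⟩ <;>
  rcases abs_cases x₂ with ⟨e2, s2⟩ | ⟨e2, s2⟩ <;>
  rw [e1] at h₁ <;> rw [e2] at h₂ <;>
  rw [abs_le] <;> constructor <;>
  nlinarith [sq_nonneg (x₁ + x₂), sq_nonneg (x₁ - x₂), sq_nonneg (x₁*x₂ - 1), sq_nonneg (x₁*x₂ + 1), mul_le_mul h₁ h₂ (by linarith) (by linarith)]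
end

section
/- For every real solution (x₀, x₁, x₂, x₃) of the system x₀x₁ + x₂² = x₃ and x₃(2x₁ + x₂ + x₃) + x₀² = x₁, it is not the case that both x₁ < 0 and x₃ < 0. -/
theorem not_both_negative (x₀ x₁ x₂ x₃ : ℝ)
    (h₁ : x₀ * x₁ + x₂ ^ 2 = x₃)
    (h₂ : x₃ * (2 * x₁ + x₂ + x₃) + x₀ ^ 2 = x₁) :
    ¬ (x₁ < 0 ∧ x₃ < 0) := by
  rintro ⟨h3, h4⟩
  nlinarith [sq_nonneg x₀, sq_nonneg x₂, sq_nonneg (x₀+x₂), sq_nonneg (x₂+x₃), sq_nonneg (x₀*x₃ - x₂), sq_nonneg (x₁ - x₃), sq_nonneg (x₁ + x₃), mul_pos (neg_pos.2 h3) (neg_pos.2 h4), sq_nonneg (x₀ + x₃), sq_nonneg (x₂*x₃ - x₀)]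
end

section
/- There are no integers x₀, x₁, x₂, x₃ satisfying both x₀(8x₁+3) + x₂² = 8x₃+2 and (8x₃+2)(16x₁+x₂+8x₃+8) + x₀² = 8x₁+3, under the assumption that every integer solution (y₀,y₁,y₂,y₃) of y₀y₁+y₂² = y₃, y₃(2y₁+y₂+y₃)+y₀² = y₁ with y₁y₃ ≠ 0 satisfies (y₁,y₃)₂ = 1, where (·,·)₂ is the 2-adic Hilbert symbol. -/
/-- The 2-adic Hilbert symbol `(a, b)₂` equals `1`, i.e. `a x² + b y² = z²`
has a nontrivial solution over `ℚ₂`. -/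
def hilbertSymbolTwoIsOne (a b : ℤ) : Prop :=
  ∃ x y z : ℚ_[2], ¬(x = 0 ∧ y = 0 ∧ z = 0) ∧
    (a : ℚ_[2]) * x ^ 2 + (b : ℚ_[2]) * y ^ 2 = z ^ 2

private lemma zmod8_descent : ∀ X Y Z : ZMod (2 ^ 3),
    3 * X ^ 2 + 2 * Y ^ 2 = Z ^ 2 →
    X.val % 2 = 0 ∧ Y.val % 2 = 0 ∧ Z.val % 2 = 0 := by decide

private lemma two_dvd_of_toZModPow (x : ℤ_[2])
    (h : (PadicInt.toZModPow 3 x).val % 2 = 0) : (2 : ℤ_[2]) ∣ x := by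
  set X := PadicInt.toZModPow 3 x with hX
  have h1 : PadicInt.toZModPow 3 ((X.val : ℤ_[2])) = X := by
    rw [map_natCast]
    exact ZMod.natCast_zmod_val X
  have h2 : x - (X.val : ℤ_[2]) ∈ RingHom.ker (PadicInt.toZModPow 3 : ℤ_[2] →+* ZMod (2 ^ 3)) := by
    rw [RingHom.mem_ker, map_sub, h1, sub_self]
  rw [PadicInt.ker_toZModPow, Ideal.mem_span_singleton] at h2
  obtain ⟨k, hk⟩ := h2
  obtain ⟨m, hm⟩ := Nat.dvd_of_mod_eq_zero h
  have : x = 2 * ((2:ℤ_[2])^2 * k + m) := by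
    have hxv : (X.val : ℤ_[2]) = 2 * m := by rw [hm]; push_cast; ring
    have : x = (2:ℤ_[2])^3 * k + (X.val : ℤ_[2]) := by
      push_cast at hk; linear_combination hk
    rw [this, hxv]; ring
  exact ⟨_, this⟩

private lemma padicint_descent (a b : ℤ_[2])
    (ha : PadicInt.toZModPow 3 a = 3) (hb : PadicInt.toZModPow 3 b = 2) :
    ∀ n : ℕ, ∀ x y z : ℤ_[2], a * x ^ 2 + b * y ^ 2 = z ^ 2 →
      (2:ℤ_[2]) ^ n ∣ x ∧ (2:ℤ_[2]) ^ n ∣ y ∧ (2:ℤ_[2]) ^ n ∣ z := by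
  intro n
  induction n with
  | zero => intro x y z _; simp
  | succ n ih =>
    intro x y z heq
    have hmod : 3 * (PadicInt.toZModPow 3 x) ^ 2 + 2 * (PadicInt.toZModPow 3 y) ^ 2
        = (PadicInt.toZModPow 3 z) ^ 2 := by
      have h0 := congrArg (PadicInt.toZModPow 3) heq
      rw [map_add, map_mul, map_mul, map_pow, map_pow, map_pow, ha, hb] at h0
      exact h0
    obtain ⟨hx, hy, hz⟩ := zmod8_descent _ _ _ hmod
    obtain ⟨x', hx'⟩ := two_dvd_of_toZModPow x hx
    obtain ⟨y', hy'⟩ := two_dvd_of_toZModPow y hy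
    obtain ⟨z', hz'⟩ := two_dvd_of_toZModPow z hz
    have heq' : a * x' ^ 2 + b * y' ^ 2 = z' ^ 2 := by
      have h4 : (4 : ℤ_[2]) * (a * x' ^ 2 + b * y' ^ 2) = 4 * z' ^ 2 := by
        have : a * x ^ 2 + b * y ^ 2 = z ^ 2 := heq
        rw [hx', hy', hz'] at this
        ring_nf at this ⊢
        linear_combination this
      have h4' : (4 : ℤ_[2]) ≠ 0 := by norm_num
      exact mul_left_cancel₀ h4' h4
    obtain ⟨dx, dy, dz⟩ := ih x' y' z' heq'
    refine ⟨?_, ?_, ?_⟩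
    · rw [hx', pow_succ, mul_comm ((2:ℤ_[2])^n) 2]; exact mul_dvd_mul_left 2 dx
    · rw [hy', pow_succ, mul_comm ((2:ℤ_[2])^n) 2]; exact mul_dvd_mul_left 2 dy
    · rw [hz', pow_succ, mul_comm ((2:ℤ_[2])^n) 2]; exact mul_dvd_mul_left 2 dz

private lemma eq_zero_of_all_pow_dvd (x : ℤ_[2]) (h : ∀ n : ℕ, (2:ℤ_[2]) ^ n ∣ x) : x = 0 := by
  rw [← PadicInt.ext_of_toZModPow]
  intro n
  have : x ∈ RingHom.ker (PadicInt.toZModPow n : ℤ_[2] →+* ZMod (2 ^ n)) := by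
    rw [PadicInt.ker_toZModPow, Ideal.mem_span_singleton]
    exact h n
  rw [RingHom.mem_ker] at this
  simpa using this

private lemma no_hilbert (a b : ℤ) (ha : a % 8 = 3) (hb : b % 8 = 2) :
    ¬ hilbertSymbolTwoIsOne a b := by
  rintro ⟨x, y, z, hnt, heq⟩
  -- cast a, b into ℤ_[2] with the right residues mod 8
  have haz : PadicInt.toZModPow 3 ((a : ℤ_[2])) = 3 := by
    rw [map_intCast]
    have : ((a : ℤ) : ZMod (2^3)) = ((3 : ℤ) : ZMod (2^3)) := by
      rw [ZMod.intCast_eq_intCast_iff']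
      norm_num [ha]
    simpa using this
  have hbz : PadicInt.toZModPow 3 ((b : ℤ_[2])) = 2 := by
    rw [map_intCast]
    have : ((b : ℤ) : ZMod (2^3)) = ((2 : ℤ) : ZMod (2^3)) := by
      rw [ZMod.intCast_eq_intCast_iff']
      norm_num [hb]
    simpa using this
  -- clear denominators: find n with all scaled elements in ℤ_[2]
  obtain ⟨n, hn⟩ : ∃ n : ℕ, max ‖x‖ (max ‖y‖ ‖z‖) ≤ (2:ℝ) ^ n := by
    obtain ⟨n, hn⟩ := pow_unbounded_of_one_lt (max ‖x‖ (max ‖y‖ ‖z‖)) (by norm_num : (1:ℝ) < 2)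
    exact ⟨n, le_of_lt hn⟩
  have hnorm : ∀ w : ℚ_[2], ‖w‖ ≤ (2:ℝ)^n → ‖(2:ℚ_[2])^n * w‖ ≤ 1 := by
    intro w hw
    rw [norm_mul, norm_pow]
    have h2 : ‖(2:ℚ_[2])‖ = 1/2 := by
      have : ‖((2:ℕ):ℚ_[2])‖ = ((2:ℕ):ℝ)⁻¹ := Padic.norm_p
      norm_num at this
      simpa using this
    rw [h2]
    calc (1/2:ℝ)^n * ‖w‖ ≤ (1/2:ℝ)^n * (2:ℝ)^n := by
          apply mul_le_mul_of_nonneg_left hw (by positivity)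
      _ = 1 := by rw [← mul_pow]; norm_num
  set c : ℚ_[2] := (2:ℚ_[2])^n with hc
  have hc0 : c ≠ 0 := pow_ne_zero _ (by norm_num)
  have hX : ‖c * x‖ ≤ 1 := hnorm x (le_trans (le_max_left _ _) hn)
  have hY : ‖c * y‖ ≤ 1 := hnorm y (le_trans (le_max_right _ _ |>.trans' (le_max_left _ _)) hn)
  have hZ : ‖c * z‖ ≤ 1 := hnorm z (le_trans (le_max_right _ _ |>.trans' (le_max_right _ _)) hn)
  set X : ℤ_[2] := ⟨c * x, hX⟩
  set Y : ℤ_[2] := ⟨c * y, hY⟩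
  set Z : ℤ_[2] := ⟨c * z, hZ⟩
  have heqZ : (a : ℤ_[2]) * X ^ 2 + (b : ℤ_[2]) * Y ^ 2 = Z ^ 2 := by
    apply Subtype.ext
    push_cast
    show (a : ℚ_[2]) * (c*x) ^ 2 + (b : ℚ_[2]) * (c*y) ^ 2 = (c*z) ^ 2
    have : c^2 * ((a : ℚ_[2]) * x ^ 2 + (b : ℚ_[2]) * y ^ 2) = c^2 * z^2 := by rw [heq]
    linear_combination this
  have hdvd := fun m => padicint_descent _ _ haz hbz m X Y Z heqZ
  have hX0 : X = 0 := eq_zero_of_all_pow_dvd X (fun m => (hdvd m).1)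
  have hY0 : Y = 0 := eq_zero_of_all_pow_dvd Y (fun m => (hdvd m).2.1)
  have hZ0 : Z = 0 := eq_zero_of_all_pow_dvd Z (fun m => (hdvd m).2.2)
  apply hnt
  have ex : ∀ w : ℚ_[2], c * w = 0 → w = 0 := by
    intro w hw
    rcases mul_eq_zero.mp hw with h | h
    · exact absurd h hc0
    · exact h
  refine ⟨ex x ?_, ex y ?_, ex z ?_⟩
  · exact congrArg Subtype.val hX0
  · exact congrArg Subtype.val hY0
  · exact congrArg Subtype.val hZ0

theorem no_integral_solution_twisted
    (hyp : ∀ y₀ y₁ y₂ y₃ : ℤ,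
      y₀ * y₁ + y₂ ^ 2 = y₃ →
      y₃ * (2 * y₁ + y₂ + y₃) + y₀ ^ 2 = y₁ →
      y₁ * y₃ ≠ 0 →
      hilbertSymbolTwoIsOne y₁ y₃) :
    ¬ ∃ x₀ x₁ x₂ x₃ : ℤ,
      x₀ * (8 * x₁ + 3) + x₂ ^ 2 = 8 * x₃ + 2 ∧
      (8 * x₃ + 2) * (16 * x₁ + x₂ + 8 * x₃ + 8) + x₀ ^ 2 = 8 * x₁ + 3 := by
  rintro ⟨x₀, x₁, x₂, x₃, h1, h2⟩
  have key := hyp x₀ (8 * x₁ + 3) x₂ (8 * x₃ + 2) h1 (by linarith [h2]) ?_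
  · exact no_hilbert _ _ (by omega) (by omega) key
  · have ha : 8 * x₁ + 3 ≠ 0 := by omega
    have hb : 8 * x₃ + 2 ≠ 0 := by omega
    exact mul_ne_zero ha hb
end

section
/- For every real solution (x₀,x₁,x₂,x₃) of the system x₀x₁ + x₂² = x₃, x₃(x₁+x₃)+x₀² = x₁, the numbers x₁ and x₃ are not both negative. -/
theorem not_both_negative' (x₀ x₁ x₂ x₃ : ℝ)
    (h₁ : x₀ * x₁ + x₂ ^ 2 = x₃)
    (h₂ : x₃ * (x₁ + x₃) + x₀ ^ 2 = x₁) :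
    ¬ (x₁ < 0 ∧ x₃ < 0) := by
  rintro ⟨hx₁, hx₃⟩
  nlinarith [sq_nonneg x₀, mul_pos (neg_pos.mpr hx₃) (neg_pos.mpr hx₁)]
end

section
/- Every real solution (x₀,x₁,x₂,x₃) of x₀(x₀+x₁) = x₂² + (x₀+1)², (x₀+x₂)(x₀+2x₂) = 2x₁² + 3x₃² with x₀ < 0 and x₀ + x₂ > 0 satisfies x₂ < 3. -/
lemma auxA (u s : ℝ) (hu : 0 ≤ u) (hus : u ≤ s) :
    9 * (u^2 * ((s - u) * (2*s - u))) ≤ 2 * s^4 := by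
  nlinarith [sq_nonneg (s - u), sq_nonneg u, sq_nonneg (s - 2*u), sq_nonneg (s*u - u^2),
    mul_nonneg hu (sub_nonneg.2 hus), sq_nonneg (s^2 - 3*u*s + u^2), sq_nonneg (2*s^2 - 3*u*s),
    mul_nonneg (mul_nonneg hu hu) (sub_nonneg.2 hus), sq_nonneg (s^2 - u^2),
    mul_nonneg (mul_nonneg (sub_nonneg.2 hus) (sub_nonneg.2 hus)) (mul_nonneg hu hu)]

theorem compact_component_bound (x₀ x₁ x₂ x₃ : ℝ)
    (h₁ : x₀ * (x₀ + x₁) = x₂ ^ 2 + (x₀ + 1) ^ 2)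
    (h₂ : (x₀ + x₂) * (x₀ + 2 * x₂) = 2 * x₁ ^ 2 + 3 * x₃ ^ 2)
    (h₃ : x₀ < 0) (h₄ : 0 < x₀ + x₂) :
    x₂ < 3 := by
  by_contra h
  push_neg at h
  have e : x₀ * x₁ = x₂ ^ 2 + 2 * x₀ + 1 := by nlinarith [h₁]
  have key : x₀ ^ 2 * ((x₀ + x₂) * (x₀ + 2 * x₂)) = 2 * (x₂ ^ 2 + 2 * x₀ + 1) ^ 2 + 3 * (x₀ * x₃) ^ 2 := by
    rw [h₂]; ring_nf; nlinarith [e, sq_nonneg x₀]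
  have hA := auxA (-x₀) x₂ (by linarith) (by linarith)
  have hB : x₂^4 < 9 * (x₂ ^ 2 + 2 * x₀ + 1) ^ 2 := by
    have hp : (x₂ - 1)^2 ≤ x₂ ^ 2 + 2 * x₀ + 1 := by nlinarith
    nlinarith [sq_nonneg (x₂ - 3), hp, sq_nonneg x₂]
  nlinarith [sq_nonneg (x₀*x₃), key, hA, hB]
end

section
/- There is no real solution (x₀,x₁,x₂,x₃) of the system x₀(x₀+x₁) = x₂² + (x₀+1)², (x₀+x₂)(x₀+2x₂) = 2x₁² + 3x₃² with x₀ > 0 and x₀ + x₂ < 0. -/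
theorem no_fourth_component :
    ¬ ∃ x₀ x₁ x₂ x₃ : ℝ,
      x₀ * (x₀ + x₁) = x₂ ^ 2 + (x₀ + 1) ^ 2 ∧
      (x₀ + x₂) * (x₀ + 2 * x₂) = 2 * x₁ ^ 2 + 3 * x₃ ^ 2 ∧
      0 < x₀ ∧ x₀ + x₂ < 0 := by
  rintro ⟨x₀, x₁, x₂, x₃, h1, h2, h0, hs⟩
  have hx1 : x₀ * x₁ = x₂ ^ 2 + 2 * x₀ + 1 := by nlinarith [sq_nonneg x₀]
  nlinarith [sq_nonneg x₃, sq_nonneg (x₀ + x₂), sq_nonneg (x₀ * x₁ - x₂ ^ 2),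
    mul_pos h0 h0, sq_nonneg x₂, sq_nonneg (x₂ ^ 2 - x₀ ^ 2),
    mul_pos (mul_pos h0 h0) h0, sq_nonneg (x₀ * x₁), sq_nonneg (x₂ + x₀),
    mul_pos h0 (neg_pos.mpr hs)]
end

section
/- For 2-adic integers x₀, x₁, x₂, x₃ satisfying x₀x₁+x₂² = x₃ and x₃(x₁+x₃)+x₀² = x₁, with x₁ ≠ 0, x₃ ≠ 0, and 8 ∣ x₃, the 2-adic Hilbert symbol satisfies (x₁, −1)₂ = 1. -/
theorem hilbert_symbol_one_of_eight_dvd (x₀ x₁ x₂ x₃ : ℤ_[2])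
    (h₁ : x₀ * x₁ + x₂ ^ 2 = x₃)
    (h₂ : x₃ * (x₁ + x₃) + x₀ ^ 2 = x₁)
    (hx₁ : x₁ ≠ 0) (hx₃ : x₃ ≠ 0) (h8 : (8 : ℤ_[2]) ∣ x₃) :
    ∃ x y z : ℚ_[2], ¬(x = 0 ∧ y = 0 ∧ z = 0) ∧
      (x₁ : ℚ_[2]) * x ^ 2 + (-1 : ℚ_[2]) * y ^ 2 = z ^ 2 := by
  -- 1 - x₃ is a square in ℤ_[2] by Hensel's lemma
  set F : Polynomial ℤ_[2] := Polynomial.X ^ 2 - Polynomial.C (1 - x₃) with hF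
  have hnorm : ‖F.eval 1‖ < ‖F.derivative.eval 1‖ ^ 2 := by
    have he : F.eval 1 = x₃ := by simp [hF]
    have hd : F.derivative.eval 1 = 2 := by simp [hF]; norm_num
    rw [he, hd]
    have h2 : ‖(2 : ℤ_[2])‖ = 1/2 := by
      simpa using PadicInt.norm_p (p := 2)
    have h8n : ‖(8 : ℤ_[2])‖ = 1/8 := by
      have : (8 : ℤ_[2]) = 2 ^ 3 := by norm_num
      rw [this, norm_pow, h2]; norm_num
    obtain ⟨c, hc⟩ := h8
    calc ‖x₃‖ = ‖(8 : ℤ_[2])‖ * ‖c‖ := by rw [hc, norm_mul]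
      _ ≤ 1/8 * 1 := by
          rw [h8n]; gcongr; exact PadicInt.norm_le_one c
      _ < (1/2) ^ 2 := by norm_num
      _ = ‖(2 : ℤ_[2])‖ ^ 2 := by rw [h2]
  obtain ⟨s, hs, -⟩ := hensels_lemma hnorm
  have hs2 : s ^ 2 = 1 - x₃ := by
    have := hs
    simp [hF] at this
    linear_combination this
  have hsne : s ≠ 0 := by
    intro h
    have h1 : x₃ = 1 := by
      have : (0:ℤ_[2]) = 1 - x₃ := by rw [← hs2, h]; ring
      linear_combination this
    have : ‖x₃‖ < 1 := by
      have : ‖F.eval 1‖ = ‖x₃‖ := by rw [show F.eval 1 = x₃ by simp [hF]]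
      calc ‖x₃‖ = ‖F.eval 1‖ := this.symm
        _ < ‖F.derivative.eval 1‖ ^ 2 := hnorm
        _ ≤ 1 := by
            have := PadicInt.norm_le_one (F.derivative.eval 1)
            nlinarith [norm_nonneg (F.derivative.eval 1)]
    rw [h1] at this
    simp at this
  refine ⟨1, (x₃ : ℚ_[2]) / (s : ℚ_[2]), (x₀ : ℚ_[2]) / (s : ℚ_[2]), ?_, ?_⟩
  · simp
  · have hsq : (s : ℚ_[2]) ≠ 0 := by
      exact_mod_cast (PadicInt.coe_eq_zero).not.mpr hsne
    have key : (1 - (x₃:ℚ_[2])) * (x₁:ℚ_[2]) = (x₀:ℚ_[2])^2 + (x₃:ℚ_[2])^2 := by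
      have : (1 - x₃) * x₁ = x₀^2 + x₃^2 := by linear_combination -h₂
      exact_mod_cast congrArg (PadicInt.Coe.ringHom (p:=2)) this
    have hs2q : (s:ℚ_[2])^2 = 1 - (x₃:ℚ_[2]) := by
      have := congrArg (fun t : ℤ_[2] => (t : ℚ_[2])) hs2
      push_cast at this
      exact this
    field_simp
    linear_combination (x₁:ℚ_[2]) * hs2q + key
end

section
/- Define sequences c, c' in ℤ³ by c₁ = (0,−2,0), c₂ = (−48,170,−24), c_{i+2} = −110·c_{i+1} − c_i − (48,48,24) and c'₁ = (0,2,0), c'₂ = (−48,−266,−24), c'_{i+2} = −110·c'_{i+1} − c'_i − (48,48,24). Then for every i ≥ 1, the point (y₀,y₁,y₂) = c_i (and likewise c'_i) satisfies 128y₀³ + 144y₀² + 32y₀y₁y₂ + 8y₀y₁ + 128y₀y₂² + 80y₀y₂ + 66y₀ − 16y₁²y₂ − 3y₁² − 4y₁y₂ + 80y₂² + 40y₂ + 12 = 0. -/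
/-- The sequence `c` (indexed from 0, so `cseq (i-1) = c_i`):
`c₁ = (0,-2,0)`, `c₂ = (-48,170,-24)`, `c_{i+2} = -110 c_{i+1} - c_i - (48,48,24)`. -/
def cseq : ℕ → ℤ × ℤ × ℤ
  | 0 => (0, -2, 0)
  | 1 => (-48, 170, -24)
  | n + 2 =>
      let a := cseq (n + 1)
      let b := cseq n
      (-110 * a.1 - b.1 - 48, -110 * a.2.1 - b.2.1 - 48, -110 * a.2.2 - b.2.2 - 24)

/-- The sequence `c'`:
`c'₁ = (0,2,0)`, `c'₂ = (-48,-266,-24)`, `c'_{i+2} = -110 c'_{i+1} - c'_i - (48,48,24)`. -/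
def cseq' : ℕ → ℤ × ℤ × ℤ
  | 0 => (0, 2, 0)
  | 1 => (-48, -266, -24)
  | n + 2 =>
      let a := cseq' (n + 1)
      let b := cseq' n
      (-110 * a.1 - b.1 - 48, -110 * a.2.1 - b.2.1 - 48, -110 * a.2.2 - b.2.2 - 24)

def onCubic (p : ℤ × ℤ × ℤ) : Prop :=
  let y₀ := p.1; let y₁ := p.2.1; let y₂ := p.2.2
  128 * y₀ ^ 3 + 144 * y₀ ^ 2 + 32 * y₀ * y₁ * y₂ + 8 * y₀ * y₁ + 128 * y₀ * y₂ ^ 2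
    + 80 * y₀ * y₂ + 66 * y₀ - 16 * y₁ ^ 2 * y₂ - 3 * y₁ ^ 2 - 4 * y₁ * y₂
    + 80 * y₂ ^ 2 + 40 * y₂ + 12 = 0

/-- The conic invariant. -/
def Qinv (p : ℤ × ℤ × ℤ) : ℤ :=
  p.2.1 ^ 2 - 4 * p.2.1 * p.2.2 - 80 * p.2.2 ^ 2 - 36 * p.2.2 - 4

/-- The mixed bilinear invariant. -/
def Minv (p q : ℤ × ℤ × ℤ) : ℤ :=
  p.2.1 * q.2.1 - 2 * p.2.1 * q.2.2 - 2 * p.2.2 * q.2.1 - 80 * p.2.2 * q.2.2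
    - 18 * p.2.2 - 18 * q.2.2 + 4

def good (p : ℤ × ℤ × ℤ) : Prop := p.1 = 2 * p.2.2 ∧ Qinv p = 0

lemma step (a b : ℤ × ℤ × ℤ) (ha : good a) (hb : good b) (hm : Minv a b = 0) :
    good (-110 * a.1 - b.1 - 48, -110 * a.2.1 - b.2.1 - 48, -110 * a.2.2 - b.2.2 - 24)
    ∧ Minv a (-110 * a.1 - b.1 - 48, -110 * a.2.1 - b.2.1 - 48,
        -110 * a.2.2 - b.2.2 - 24) = 0 := by
  obtain ⟨ha1, ha2⟩ := ha
  obtain ⟨hb1, hb2⟩ := hb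
  unfold good Qinv Minv at *
  refine ⟨⟨by dsimp only; linarith, ?_⟩, ?_⟩
  · dsimp only
    linear_combination 12100 * ha2 + hb2 + 220 * hm
  · dsimp only
    linear_combination (-110 : ℤ) * ha2 - hm

lemma good_cseq (n : ℕ) :
    good (cseq n) ∧ good (cseq (n + 1)) ∧ Minv (cseq n) (cseq (n + 1)) = 0 := by
  induction n with
  | zero => refine ⟨⟨rfl, rfl⟩, ⟨rfl, rfl⟩, rfl⟩
  | succ n ih =>
    obtain ⟨h1, h2, h3⟩ := ih
    have := step (cseq (n + 1)) (cseq n) h2 h1 (by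
      unfold Minv at h3 ⊢; linarith [h3])
    exact ⟨h2, this.1, this.2⟩

lemma good_cseq' (n : ℕ) :
    good (cseq' n) ∧ good (cseq' (n + 1)) ∧ Minv (cseq' n) (cseq' (n + 1)) = 0 := by
  induction n with
  | zero => refine ⟨⟨rfl, rfl⟩, ⟨rfl, rfl⟩, rfl⟩
  | succ n ih =>
    obtain ⟨h1, h2, h3⟩ := ih
    have := step (cseq' (n + 1)) (cseq' n) h2 h1 (by
      unfold Minv at h3 ⊢; linarith [h3])
    exact ⟨h2, this.1, this.2⟩

lemma good_onCubic (p : ℤ × ℤ × ℤ) (h : good p) : onCubic p := by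
  obtain ⟨x, y, z⟩ := p
  obtain ⟨h1, h2⟩ := h
  unfold Qinv at h2
  dsimp only at h1 h2
  unfold onCubic
  dsimp only
  subst h1
  linear_combination (-(16 * z) - 3) * h2

theorem pell_points_on_cubic (n : ℕ) : onCubic (cseq n) ∧ onCubic (cseq' n) := by
  exact ⟨good_onCubic _ (good_cseq n).1, good_onCubic _ (good_cseq' n).1⟩
end
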